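/- Osgood/Grönwall inequality (quantitative form): Let t₀ ≤ T be reals, a > 0, c > 0. Let f : [t₀,T] → (0,∞) be measurable and bounded, let φ : [t₀,T] → [0,∞) be integrable, and let ϖ : (0,∞) → (0,∞) be continuous and nondecreasing. Define Ψ(x) := ∫_x^a dr/ϖ(r) for x > 0 (a strictly decreasing function; Ψ(x) ≤ 0 for x ≥ a). If f(t) ≤ c + ∫_{t₀}^t φ(τ) ϖ(f(τ)) dτ for every t ∈ [t₀,T], then for every t ∈ [t₀,T] one has Ψ(c) − Ψ(f(t)) ≤ ∫_{t₀}^t φ(τ) dτ. -/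

import Mathlib

/-! The majorant `F t = c + ∫_{t₀}^t φ ϖ(f)` is continuous, nondecreasing, dominates `f` and
satisfies `F t - F s ≤ ϖ (F t) ∫_s^t φ` for `s ≤ t`. As `1/ϖ` is nonincreasing,
`G y = ∫_c^y dr / ϖ r` is concave, so
`G (F t) - G (F s) ≤ (F t - F s) / ϖ (F s) ≤ (ϖ (F t) / ϖ (F s)) ∫_s^t φ`.
For any `κ > 1`, uniform continuity of `ϖ ∘ F` bounds the ratio by `κ` on short steps, and
chaining short steps gives `G (F t) ≤ κ ∫_{t₀}^t φ`; let `κ → 1` and use `f ≤ F`. -/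

open MeasureTheory intervalIntegral
open Set Filter Topology

theorem ContinuousOn.comp_aemeasurable_of_ae_mem {α β γ : Type*} [MeasurableSpace α]
    [TopologicalSpace β] [MeasurableSpace β] [OpensMeasurableSpace β]
    [TopologicalSpace γ] [MeasurableSpace γ] [BorelSpace γ] {μ : Measure α}
    {f : α → β} {g : β → γ} {s : Set β} (hg : ContinuousOn g s) (hs : MeasurableSet s)
    (hf : AEMeasurable f μ) (hfs : ∀ᵐ x ∂μ, f x ∈ s) : AEMeasurable (fun x => g (f x)) μ := by
  have hg' := hg.aemeasurable hs (μ := μ.map f)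
  rw [Measure.restrict_eq_self_of_ae_mem ((ae_map_iff hf hs).2 hfs)] at hg'
  exact hg'.comp_aemeasurable' hf

theorem AntitoneOn.integral_le_sub_mul {h : ℝ → ℝ} {x y : ℝ} (hh : AntitoneOn h (uIcc x y)) :
    ∫ r in x..y, h r ≤ (y - x) * h x := by
  rcases le_total x y with hxy | hyx
  · simpa using integral_mono_on (μ := volume) hxy hh.intervalIntegrable intervalIntegrable_const
      fun r hr => hh left_mem_uIcc (Icc_subset_uIcc hr) hr.1
  · have := integral_mono_on (μ := volume) hyx intervalIntegrable_const
      hh.intervalIntegrable.symm fun r hr => hh (Icc_subset_uIcc' hr) left_mem_uIcc hr.2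
    rw [integral_symm]
    simp only [intervalIntegral.integral_const, smul_eq_mul] at this
    linarith

theorem IsCompact.exists_pos_forall_dist_lt_le_mul {α : Type*} [PseudoMetricSpace α]
    {K : Set α} {w : α → ℝ} (hK : IsCompact K) (hw : ContinuousOn w K)
    (hw_pos : ∀ x ∈ K, 0 < w x) {κ : ℝ} (hκ : 1 < κ) :
    ∃ δ > 0, ∀ x ∈ K, ∀ y ∈ K, dist x y < δ → w y ≤ κ * w x := by
  rcases K.eq_empty_or_nonempty with rfl | hne
  · exact ⟨1, one_pos, by simp⟩
  obtain ⟨x₀, hx₀, hmin⟩ := hK.exists_isMinOn hne hw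
  obtain ⟨δ, hδ, hclose⟩ := Metric.uniformContinuousOn_iff.mp
    (hK.uniformContinuousOn_of_continuous hw) ((κ - 1) * w x₀)
    (mul_pos (sub_pos.2 hκ) (hw_pos x₀ hx₀))
  refine ⟨δ, hδ, fun x hx y hy hxy => ?_⟩
  have hwy : w y < w x + (κ - 1) * w x₀ := by
    have := hclose x hx y hy hxy
    rw [Real.dist_eq, abs_lt] at this
    linarith
  have hwx : (κ - 1) * w x₀ ≤ (κ - 1) * w x :=
    mul_le_mul_of_nonneg_left (hmin hx) (sub_pos.2 hκ).le
  linarith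

theorem le_of_forall_short_steps {D : ℝ → ℝ} {a b δ : ℝ} (hab : a ≤ b) (hδ : 0 < δ)
    (hstep : ∀ s ∈ Icc a b, ∀ t ∈ Icc a b, s ≤ t → t - s < δ → D s ≤ D t) : D a ≤ D b := by
  set u : ℕ → ℝ := fun i => min (a + i * (δ / 2)) b
  have hu_mem (i : ℕ) : u i ∈ Icc a b :=
    ⟨le_min (le_add_of_nonneg_right (by positivity)) hab, min_le_right _ _⟩
  have hu_step (i : ℕ) : u i ≤ u (i + 1) ∧ u (i + 1) - u i < δ := by
    simp only [u]
    push_cast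
    constructor
    · gcongr; linarith
    · rw [min_def, min_def]; split_ifs <;> linarith
  have hmono : Monotone (D ∘ u) := monotone_nat_of_le_succ fun i =>
    hstep _ (hu_mem i) _ (hu_mem (i + 1)) (hu_step i).1 (hu_step i).2
  obtain ⟨N, hN⟩ := exists_nat_ge ((b - a) / (δ / 2))
  have huN : u N = b := min_eq_right (by rw [div_le_iff₀ (by positivity)] at hN; linarith)
  simpa [u, hab, huN] using hmono (Nat.zero_le N)

theorem Set.uIcc_subset_Ioi {α : Type*} [LinearOrder α] {a x y : α} (hx : a < x) (hy : a < y) :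
    uIcc x y ⊆ Ioi a :=
  fun _ hr => (lt_min hx hy).trans_le hr.1

section Osgood

variable {ϖ : ℝ → ℝ}

theorem antitoneOn_inv_of_monotoneOn (hϖ_mono : MonotoneOn ϖ (Ioi 0))
    (hϖ_pos : ∀ r, 0 < r → 0 < ϖ r) : AntitoneOn (fun r => (ϖ r)⁻¹) (Ioi 0) :=
  fun r hr _ hs hrs => inv_anti₀ (hϖ_pos r hr) (hϖ_mono hr hs hrs)

theorem intervalIntegrable_inv_of_monotoneOn (hϖ_mono : MonotoneOn ϖ (Ioi 0))
    (hϖ_pos : ∀ r, 0 < r → 0 < ϖ r) {x y : ℝ} (hx : 0 < x) (hy : 0 < y) :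
    IntervalIntegrable (fun r => (ϖ r)⁻¹) volume x y :=
  ((antitoneOn_inv_of_monotoneOn hϖ_mono hϖ_pos).mono (uIcc_subset_Ioi hx hy)).intervalIntegrable

theorem integral_inv_le_sub_div (hϖ_mono : MonotoneOn ϖ (Ioi 0))
    (hϖ_pos : ∀ r, 0 < r → 0 < ϖ r) {x y : ℝ} (hx : 0 < x) (hy : 0 < y) :
    ∫ r in x..y, (ϖ r)⁻¹ ≤ (y - x) / ϖ x :=
  ((antitoneOn_inv_of_monotoneOn hϖ_mono hϖ_pos).mono (uIcc_subset_Ioi hx hy)).integral_le_sub_mul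

theorem integral_inv_le_integral_of_sub_le_mul_integral {F φ : ℝ → ℝ} {a b : ℝ} (hab : a ≤ b)
    (hF : ContinuousOn F (Icc a b)) (hF_pos : ∀ t ∈ Icc a b, 0 < F t)
    (hφ : IntegrableOn φ (Icc a b)) (hφ_nonneg : ∀ t ∈ Icc a b, 0 ≤ φ t)
    (hϖ_cont : ContinuousOn ϖ (Ioi 0)) (hϖ_mono : MonotoneOn ϖ (Ioi 0))
    (hϖ_pos : ∀ r, 0 < r → 0 < ϖ r)
    (hinc : ∀ s ∈ Icc a b, ∀ t ∈ Icc a b, s ≤ t → F t - F s ≤ ϖ (F t) * ∫ τ in s..t, φ τ) :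
    ∫ r in F a..F b, (ϖ r)⁻¹ ≤ ∫ τ in a..b, φ τ := by
  have hlim : Tendsto (fun κ => (∫ τ in a..b, φ τ) * κ) (𝓝[>] 1) (𝓝 (∫ τ in a..b, φ τ)) := by
    simpa using
      ((continuous_const_mul (∫ τ in a..b, φ τ)).tendsto 1).mono_left nhdsWithin_le_nhds
  refine ge_of_tendsto hlim (eventually_nhdsWithin_of_forall fun κ (hκ : 1 < κ) => ?_)
  obtain ⟨δ, hδ, hratio⟩ := isCompact_Icc.exists_pos_forall_dist_lt_le_mul
    (hϖ_cont.comp hF hF_pos) (fun t ht => hϖ_pos _ (hF_pos t ht)) hκ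
  have hφ_ii {s t : ℝ} (hs : s ∈ Icc a b) (ht : t ∈ Icc a b) : IntervalIntegrable φ volume s t :=
    (hφ.mono_set (uIcc_subset_Icc hs ht)).intervalIntegrable
  have hinv_ii {s t : ℝ} (hs : s ∈ Icc a b) (ht : t ∈ Icc a b) :
      IntervalIntegrable (fun r => (ϖ r)⁻¹) volume (F s) (F t) :=
    intervalIntegrable_inv_of_monotoneOn hϖ_mono hϖ_pos (hF_pos s hs) (hF_pos t ht)
  have ha : a ∈ Icc a b := left_mem_Icc.2 hab
  have hD := le_of_forall_short_steps
    (D := fun x => (∫ τ in a..x, φ τ) * κ - ∫ r in F a..F x, (ϖ r)⁻¹) hab hδ ?_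
  · simpa using hD
  intro s hs t ht hst hδst
  have hX : 0 ≤ ∫ τ in s..t, φ τ :=
    integral_nonneg hst fun τ hτ => hφ_nonneg τ ⟨hs.1.trans hτ.1, hτ.2.trans ht.2⟩
  have hϖFs := hϖ_pos _ (hF_pos s hs)
  have hstep : ∫ r in F s..F t, (ϖ r)⁻¹ ≤ (∫ τ in s..t, φ τ) * κ :=
    calc ∫ r in F s..F t, (ϖ r)⁻¹ ≤ (F t - F s) / ϖ (F s) :=
          integral_inv_le_sub_div hϖ_mono hϖ_pos (hF_pos s hs) (hF_pos t ht)
      _ ≤ ϖ (F t) * (∫ τ in s..t, φ τ) / ϖ (F s) := by gcongr; exact hinc s hs t ht hst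
      _ ≤ κ * ϖ (F s) * (∫ τ in s..t, φ τ) / ϖ (F s) := by
          gcongr
          exact hratio s hs t ht
            (by rwa [Real.dist_eq, abs_sub_comm, abs_of_nonneg (sub_nonneg.2 hst)])
      _ = (∫ τ in s..t, φ τ) * κ := by field_simp
  rw [← integral_interval_sub_left (hinv_ii ha ht) (hinv_ii ha hs),
    ← integral_interval_sub_left (hφ_ii ha ht) (hφ_ii ha hs)] at hstep
  linarith

theorem integral_inv_mono_right (hϖ_mono : MonotoneOn ϖ (Ioi 0))
    (hϖ_pos : ∀ r, 0 < r → 0 < ϖ r) {c x y : ℝ} (hc : 0 < c) (hx : 0 < x) (hxy : x ≤ y) :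
    ∫ r in c..x, (ϖ r)⁻¹ ≤ ∫ r in c..y, (ϖ r)⁻¹ := by
  have hy := hx.trans_le hxy
  rw [← integral_add_adjacent_intervals
    (intervalIntegrable_inv_of_monotoneOn hϖ_mono hϖ_pos hc hx)
    (intervalIntegrable_inv_of_monotoneOn hϖ_mono hϖ_pos hx hy), le_add_iff_nonneg_right]
  exact integral_nonneg hxy fun r hr => (inv_pos.2 (hϖ_pos r (hx.trans_le hr.1))).le

theorem integral_inv_le_integral_of_le_add_integral {f φ : ℝ → ℝ} {a b c : ℝ} (hab : a ≤ b)
    (hc : 0 < c) (hf_pos : ∀ t ∈ Icc a b, 0 < f t)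
    (hg : IntegrableOn (fun τ => φ τ * ϖ (f τ)) (Icc a b))
    (hφ : IntegrableOn φ (Icc a b)) (hφ_nonneg : ∀ t ∈ Icc a b, 0 ≤ φ t)
    (hϖ_cont : ContinuousOn ϖ (Ioi 0)) (hϖ_mono : MonotoneOn ϖ (Ioi 0))
    (hϖ_pos : ∀ r, 0 < r → 0 < ϖ r)
    (hineq : ∀ t ∈ Icc a b, f t ≤ c + ∫ τ in a..t, φ τ * ϖ (f τ)) :
    ∫ r in c..f b, (ϖ r)⁻¹ ≤ ∫ τ in a..b, φ τ := by
  set F := fun x => c + ∫ τ in a..x, φ τ * ϖ (f τ)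
  have hF_sub {s t : ℝ} (hs : s ∈ Icc a b) (ht : t ∈ Icc a b) :
      F t - F s = ∫ τ in s..t, φ τ * ϖ (f τ) := by
    rw [add_sub_add_left_eq_sub, integral_interval_sub_left
      (hg.mono_set (uIcc_subset_Icc (left_mem_Icc.2 hab) ht)).intervalIntegrable
      (hg.mono_set (uIcc_subset_Icc (left_mem_Icc.2 hab) hs)).intervalIntegrable]
  have hF_mono : MonotoneOn F (Icc a b) := fun s hs t ht hst =>
    sub_nonneg.1 <| hF_sub hs ht ▸ integral_nonneg hst fun τ hτ =>
      have hτ' : τ ∈ Icc a b := ⟨hs.1.trans hτ.1, hτ.2.trans ht.2⟩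
      mul_nonneg (hφ_nonneg τ hτ') (hϖ_pos _ (hf_pos τ hτ')).le
  have hF_pos (t : ℝ) (ht : t ∈ Icc a b) : 0 < F t :=
    hc.trans_le (by simpa [F] using hF_mono (left_mem_Icc.2 hab) ht ht.1)
  have hF_cont : ContinuousOn F (Icc a b) := by
    have := continuousOn_primitive_interval (μ := volume) (a := a) (b := b)
      (f := fun τ => φ τ * ϖ (f τ)) (by rwa [uIcc_of_le hab])
    exact continuousOn_const.add (by rwa [uIcc_of_le hab] at this)
  have hinc (s : ℝ) (hs : s ∈ Icc a b) (t : ℝ) (ht : t ∈ Icc a b) (hst : s ≤ t) :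
      F t - F s ≤ ϖ (F t) * ∫ τ in s..t, φ τ := by
    rw [hF_sub hs ht, ← intervalIntegral.integral_const_mul]
    refine integral_mono_on hst (hg.mono_set (uIcc_subset_Icc hs ht)).intervalIntegrable
      ((hφ.mono_set (uIcc_subset_Icc hs ht)).intervalIntegrable.const_mul _) fun τ hτ => ?_
    have hτ' : τ ∈ Icc a b := ⟨hs.1.trans hτ.1, hτ.2.trans ht.2⟩
    rw [mul_comm]
    exact mul_le_mul_of_nonneg_right (hϖ_mono (hf_pos τ hτ') (hF_pos t ht)
      ((hineq τ hτ').trans (hF_mono hτ' ht hτ.2))) (hφ_nonneg τ hτ')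
  calc ∫ r in c..f b, (ϖ r)⁻¹ ≤ ∫ r in F a..F b, (ϖ r)⁻¹ := by
        simpa [F] using integral_inv_mono_right hϖ_mono hϖ_pos hc
          (hf_pos b (right_mem_Icc.2 hab)) (hineq b (right_mem_Icc.2 hab))
    _ ≤ ∫ τ in a..b, φ τ := integral_inv_le_integral_of_sub_le_mul_integral hab hF_cont hF_pos
          hφ hφ_nonneg hϖ_cont hϖ_mono hϖ_pos hinc

end Osgood

theorem osgood_gronwall_quantitative_general (t₀ T a c : ℝ)
    (ha : 0 < a) (hc : 0 < c)
    (f φ ϖ : ℝ → ℝ)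
    (hf_meas : AEMeasurable f (volume.restrict (Set.Icc t₀ T)))
    (hf_bdd : ∃ M : ℝ, ∀ t ∈ Set.Icc t₀ T, f t ≤ M)
    (hf_pos : ∀ t ∈ Set.Icc t₀ T, 0 < f t)
    (hφ_int : IntegrableOn φ (Set.Icc t₀ T) volume)
    (hφ_nonneg : ∀ t ∈ Set.Icc t₀ T, 0 ≤ φ t)
    (hϖ_cont : ContinuousOn ϖ (Set.Ioi (0 : ℝ)))
    (hϖ_mono : MonotoneOn ϖ (Set.Ioi (0 : ℝ)))
    (hϖ_pos : ∀ r : ℝ, 0 < r → 0 < ϖ r)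
    (hineq : ∀ t ∈ Set.Icc t₀ T, f t ≤ c + ∫ τ in t₀..t, φ τ * ϖ (f τ)) :
    ∀ t ∈ Set.Icc t₀ T,
      (∫ r in c..a, (ϖ r)⁻¹) - (∫ r in (f t)..a, (ϖ r)⁻¹) ≤ ∫ τ in t₀..t, φ τ := by
  intro t ht
  obtain ⟨M, hM⟩ := hf_bdd
  have hg : IntegrableOn (fun τ => φ τ * ϖ (f τ)) (Icc t₀ T) := by
    refine hφ_int.mul_bdd (c := ϖ (max M a)) (hϖ_cont.comp_aemeasurable_of_ae_mem
      measurableSet_Ioi hf_meas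
      (ae_restrict_of_forall_mem measurableSet_Icc hf_pos)).aestronglyMeasurable ?_
    filter_upwards [ae_restrict_mem measurableSet_Icc] with τ hτ
    rw [Real.norm_of_nonneg (hϖ_pos _ (hf_pos τ hτ)).le]
    exact hϖ_mono (hf_pos τ hτ) (ha.trans_le (le_max_right _ _))
      ((hM τ hτ).trans (le_max_left _ _))
  have hsub : Icc t₀ t ⊆ Icc t₀ T := Icc_subset_Icc_right ht.2
  have hft := hf_pos t ht
  rw [← integral_add_adjacent_intervals
    (intervalIntegrable_inv_of_monotoneOn hϖ_mono hϖ_pos hc hft)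
    (intervalIntegrable_inv_of_monotoneOn hϖ_mono hϖ_pos hft ha), add_sub_cancel_right]
  exact integral_inv_le_integral_of_le_add_integral ht.1 hc (fun τ hτ => hf_pos τ (hsub hτ))
    (hg.mono_set hsub) (hφ_int.mono_set hsub) (fun τ hτ => hφ_nonneg τ (hsub hτ)) hϖ_cont hϖ_mono
    hϖ_pos fun τ hτ => hineq τ (hsub hτ)

/-- **Osgood/Grönwall inequality (quantitative form).** Let `t₀ ≤ T`, `a > 0`, `c > 0`.
Let `f` be a positive measurable bounded function on `[t₀, T]`, `φ ≥ 0` integrable on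
`[t₀, T]`, and `ϖ` continuous and nondecreasing on `(0, ∞)` with `ϖ > 0` there.
With `Ψ x = ∫_x^a dr / ϖ r`, if `f t ≤ c + ∫_{t₀}^t φ τ · ϖ (f τ) dτ` on `[t₀, T]`,
then `Ψ c - Ψ (f t) ≤ ∫_{t₀}^t φ τ dτ` on `[t₀, T]`. -/
theorem osgood_gronwall_quantitative (t₀ T a c : ℝ) (htT : t₀ ≤ T)
    (ha : 0 < a) (hc : 0 < c)
    (f φ ϖ : ℝ → ℝ)
    (hf_meas : AEMeasurable f (volume.restrict (Set.Icc t₀ T)))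
    (hf_bdd : ∃ M : ℝ, ∀ t ∈ Set.Icc t₀ T, f t ≤ M)
    (hf_pos : ∀ t ∈ Set.Icc t₀ T, 0 < f t)
    (hφ_int : IntegrableOn φ (Set.Icc t₀ T) volume)
    (hφ_nonneg : ∀ t ∈ Set.Icc t₀ T, 0 ≤ φ t)
    (hϖ_cont : ContinuousOn ϖ (Set.Ioi (0 : ℝ)))
    (hϖ_mono : MonotoneOn ϖ (Set.Ioi (0 : ℝ)))
    (hϖ_pos : ∀ r : ℝ, 0 < r → 0 < ϖ r)
    (hineq : ∀ t ∈ Set.Icc t₀ T, f t ≤ c + ∫ τ in t₀..t, φ τ * ϖ (f τ)) :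
    ∀ t ∈ Set.Icc t₀ T,
      (∫ r in c..a, (ϖ r)⁻¹) - (∫ r in (f t)..a, (ϖ r)⁻¹) ≤ ∫ τ in t₀..t, φ τ :=
  osgood_gronwall_quantitative_general t₀ T a c ha hc f φ ϖ hf_meas hf_bdd hf_pos hφ_int hφ_nonneg
    hϖ_cont hϖ_mono hϖ_pos hineq
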